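/- arXiv:1904.02783 — 4 statements merged into one kernel-verified Lean document; each statement's English description precedes it below -/
import Mathlib

section
/- Let S be Gamma-distributed with shape P+1 and rate 1 (pdf x^P e^{−x}/P!), and let ε, ρ, γ_0, γ_1 > 0 satisfy γ_0^2 > γ_1^2 ε. Then P( ργ_0^2 / (ργ_1^2 + ((P+1)/S)) < ε ) = g(P+1, ε(P+1)/(ρ(γ_0^2 − γ_1^2 ε)))/P!, where g(a,x) = ∫_0^x t^{a−1}e^{−t} dt is the lower incomplete Gamma function. -/
open MeasureTheory ProbabilityTheory Set

/-!
On the event `S > 0` the signal-to-interference ratio is below `ε` exactly when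
`S < ε (P+1) / (ρ (γ₀² - γ₁² ε))`, and `S ≤ 0` is a null event for the Gamma law.
The outage probability is therefore a value of the Gamma CDF, which for integer shape `P+1`
and rate `1` is the lower incomplete Gamma function divided by `P!`.
-/

lemma div_add_div_lt_iff {a b c ε x : ℝ} (hb : 0 < b) (hc : 0 ≤ c) (hx : 0 < x)
    (h : c * ε < a) : a / (c + b / x) < ε ↔ x < ε * b / (a - c * ε) := by
  have hden : 0 < c + b / x := by positivity
  rw [div_lt_iff₀ hden, lt_div_iff₀ (sub_pos.mpr h), mul_add, mul_div_assoc', ← sub_lt_iff_lt_add',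
    lt_div_iff₀ hx, mul_comm x, mul_comm ε c]

namespace ProbabilityTheory

lemma gammaMeasure_Iic_zero (a r : ℝ) : gammaMeasure a r (Iic 0) = 0 := by
  rw [gammaMeasure, withDensity_apply _ measurableSet_Iic, ← setLIntegral_congr Iio_ae_eq_Iic]
  exact lintegral_gammaPDF_of_nonpos le_rfl

lemma gammaMeasure_inter_Ioi_zero (a r : ℝ) (s : Set ℝ) :
    gammaMeasure a r (s ∩ Ioi 0) = gammaMeasure a r s :=
  measure_inter_conull (by rw [compl_Ioi]; exact gammaMeasure_Iic_zero a r)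

lemma gammaMeasure_real_apply {a r : ℝ} (ha : 0 < a) (hr : 0 < r) (s : Set ℝ) :
    (gammaMeasure a r).real s = ∫ x in s, gammaPDFReal a r x := by
  rw [measureReal_def, gammaMeasure, withDensity_apply' _ s]
  refine (integral_eq_lintegral_of_nonneg_ae ?_ (by fun_prop)).symm
  exact ae_of_all _ (gammaPDFReal_nonneg ha hr)

lemma gammaPDFReal_natCast_add_one_one (n : ℕ) {x : ℝ} (hx : 0 ≤ x) :
    gammaPDFReal (n + 1) 1 x = x ^ n * Real.exp (-x) / n.factorial := by
  rw [gammaPDFReal, if_pos hx, Real.one_rpow, Real.Gamma_nat_eq_factorial, add_sub_cancel_right,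
    Real.rpow_natCast, one_mul]
  ring

lemma gammaMeasure_natCast_add_one_one_real_Ioo (n : ℕ) (c : ℝ) :
    (gammaMeasure (n + 1) 1).real (Ioo 0 c) =
      (∫ t in Ioo 0 c, t ^ n * Real.exp (-t)) / n.factorial := by
  rw [gammaMeasure_real_apply (by positivity) one_pos, ← integral_div]
  exact setIntegral_congr_fun measurableSet_Ioo
    fun x hx ↦ gammaPDFReal_natCast_add_one_one n hx.1.le

end ProbabilityTheory

theorem stmt_8_general {Ω : Type*} [MeasureSpace Ω] [IsProbabilityMeasure (volume : Measure Ω)]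
    (P : ℕ) (S : Ω → ℝ) (hSmeas : Measurable S)
    (hlaw : Measure.map S volume = gammaMeasure ((P : ℝ) + 1) 1)
    (ε ρ γ₀ γ₁ : ℝ) (hρ : 0 < ρ)
    (hpow : γ₁ ^ 2 * ε < γ₀ ^ 2) :
    (volume {ω : Ω | ρ * γ₀ ^ 2 / (ρ * γ₁ ^ 2 + ((P : ℝ) + 1) / S ω) < ε}).toReal =
      (∫ t in Set.Ioo (0 : ℝ) (ε * ((P : ℝ) + 1) / (ρ * (γ₀ ^ 2 - γ₁ ^ 2 * ε))),
        t ^ P * Real.exp (-t)) / (P.factorial : ℝ) := by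
  set A : Set ℝ := {x | ρ * γ₀ ^ 2 / (ρ * γ₁ ^ 2 + ((P : ℝ) + 1) / x) < ε}
  have hA : MeasurableSet A := measurableSet_lt (by fun_prop) measurable_const
  have hgap : ρ * γ₁ ^ 2 * ε < ρ * γ₀ ^ 2 := by nlinarith
  have hApos : A ∩ Ioi 0 = Ioo 0 (ε * ((P : ℝ) + 1) / (ρ * (γ₀ ^ 2 - γ₁ ^ 2 * ε))) := by
    ext x
    simp only [A, mem_inter_iff, mem_ofPred_eq, mem_Ioi, mem_Ioo, and_comm (a := 0 < x),
      mul_sub, ← mul_assoc]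
    exact and_congr_left fun hx ↦ div_add_div_lt_iff (by positivity) (by positivity) hx hgap
  calc (volume (S ⁻¹' A)).toReal
      = (gammaMeasure ((P : ℝ) + 1) 1).real (A ∩ Ioi 0) := by
        rw [measureReal_def, gammaMeasure_inter_Ioi_zero, ← hlaw, Measure.map_apply hSmeas hA]
    _ = _ := by rw [hApos, gammaMeasure_natCast_add_one_one_real_Ioo]

/-- If `S` is Gamma-distributed with shape `P+1` and rate 1 and `γ_0² > γ_1² ε`, then
`P( ργ_0²/(ργ_1² + (P+1)/S) < ε ) = g(P+1, ε(P+1)/(ρ(γ_0² − γ_1² ε)))/P!`, where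
`g` is the lower incomplete Gamma function. -/
theorem stmt_8 {Ω : Type*} [MeasureSpace Ω] [IsProbabilityMeasure (volume : Measure Ω)]
    (P : ℕ) (S : Ω → ℝ) (hSmeas : Measurable S)
    (hlaw : Measure.map S volume = gammaMeasure ((P : ℝ) + 1) 1)
    (ε ρ γ₀ γ₁ : ℝ) (hε : 0 < ε) (hρ : 0 < ρ) (hγ₀ : 0 < γ₀) (hγ₁ : 0 < γ₁)
    (hpow : γ₁ ^ 2 * ε < γ₀ ^ 2) :
    (volume {ω : Ω | ρ * γ₀ ^ 2 / (ρ * γ₁ ^ 2 + ((P : ℝ) + 1) / S ω) < ε}).toReal =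
      (∫ t in Set.Ioo (0 : ℝ) (ε * ((P : ℝ) + 1) / (ρ * (γ₀ ^ 2 - γ₁ ^ 2 * ε))),
        t ^ P * Real.exp (-t)) / (P.factorial : ℝ) :=
  stmt_8_general P S hSmeas hlaw ε ρ γ₀ γ₁ hρ hpow
end

section
/- With the setup of the previous statement, the outage probability P(ρ) = g(P+1, ε(P+1)/(ρ(γ_0^2−γ_1^2 ε)))/P! satisfies lim_{ρ→∞} −log P(ρ)/log ρ = P+1, i.e., the detection of the last symbol achieves full multi-path diversity order P+1. -/
/-! For small `x` the integrand `t ^ P * exp (-t)` lies between `t ^ P * exp (-x)` and `t ^ P`,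
so `g(P+1, x) = x ^ (P+1) / (P+1) * (1 + O(x))`. The argument of `g` is `c / ρ` for a constant
`c > 0`, hence `-log P(ρ) = (P+1) log ρ + O(1)`, and dividing by `log ρ` gives the limit. -/

open MeasureTheory Filter Real Topology

lemma integral_pow_Ioo (P : ℕ) {x : ℝ} (hx : 0 ≤ x) :
    ∫ t in Set.Ioo 0 x, t ^ P = x ^ (P + 1) / (P + 1) := by
  rw [← integral_Ioc_eq_integral_Ioo, ← intervalIntegral.integral_of_le hx, integral_pow]
  simp

lemma integrableOn_Ioo_of_continuous {f : ℝ → ℝ} (hf : Continuous f) (a b : ℝ) :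
    IntegrableOn f (Set.Ioo a b) :=
  hf.integrableOn_Icc.mono_set Set.Ioo_subset_Icc_self

section IncompleteGamma

variable (P : ℕ) {x : ℝ}

lemma setIntegral_pow_mul_exp_neg_le (hx : 0 ≤ x) :
    ∫ t in Set.Ioo 0 x, t ^ P * exp (-t) ≤ x ^ (P + 1) / (P + 1) := by
  rw [← integral_pow_Ioo P hx]
  refine setIntegral_mono_on (integrableOn_Ioo_of_continuous (by fun_prop) _ _)
    (integrableOn_Ioo_of_continuous (by fun_prop) _ _) measurableSet_Ioo fun t ht => ?_
  exact mul_le_of_le_one_right (pow_nonneg ht.1.le P) (exp_le_one_iff.mpr (by linarith [ht.1]))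

lemma exp_neg_mul_le_setIntegral_pow_mul_exp_neg (hx : 0 ≤ x) :
    exp (-x) * (x ^ (P + 1) / (P + 1)) ≤ ∫ t in Set.Ioo 0 x, t ^ P * exp (-t) := by
  rw [← integral_pow_Ioo P hx, ← integral_const_mul]
  refine setIntegral_mono_on (integrableOn_Ioo_of_continuous (by fun_prop) _ _)
    (integrableOn_Ioo_of_continuous (by fun_prop) _ _) measurableSet_Ioo fun t ht => ?_
  rw [mul_comm]
  exact mul_le_mul_of_nonneg_left (exp_le_exp.mpr (by linarith [ht.2])) (pow_nonneg ht.1.le P)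

lemma setIntegral_pow_mul_exp_neg_pos (hx : 0 < x) :
    0 < ∫ t in Set.Ioo 0 x, t ^ P * exp (-t) :=
  lt_of_lt_of_le (by positivity) (exp_neg_mul_le_setIntegral_pow_mul_exp_neg P hx.le)

lemma log_setIntegral_pow_mul_exp_neg_mem_Icc (hx : 0 < x) :
    log (∫ t in Set.Ioo 0 x, t ^ P * exp (-t)) - (P + 1) * log x ∈
      Set.Icc (-log (P + 1) - x) (-log (P + 1)) := by
  have hbound : 0 < x ^ (P + 1) / (P + 1) := by positivity
  have hlog : log (x ^ (P + 1) / (P + 1)) = (P + 1) * log x - log (P + 1) := by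
    rw [log_div (by positivity) (by positivity), log_pow]
    push_cast
    ring
  constructor
  · have := log_le_log (by positivity) (exp_neg_mul_le_setIntegral_pow_mul_exp_neg P hx.le)
    rw [log_mul (exp_pos _).ne' hbound.ne', log_exp, hlog] at this
    linarith
  · have := log_le_log (setIntegral_pow_mul_exp_neg_pos P hx)
      (setIntegral_pow_mul_exp_neg_le P hx.le)
    rw [hlog] at this
    linarith

lemma tendsto_log_setIntegral_pow_mul_exp_neg_sub_mul_log :
    Tendsto (fun x => log (∫ t in Set.Ioo 0 x, t ^ P * exp (-t)) - (P + 1) * log x)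
      (𝓝[>] 0) (𝓝 (-log (P + 1))) := by
  have hlower : Tendsto (fun x : ℝ => -log (P + 1) - x) (𝓝[>] 0) (𝓝 (-log (P + 1))) :=
    tendsto_nhdsWithin_of_tendsto_nhds (by simpa using (continuous_sub_left _).tendsto (0 : ℝ))
  refine tendsto_of_tendsto_of_tendsto_of_le_of_le' hlower tendsto_const_nhds ?_ ?_ <;>
    filter_upwards [self_mem_nhdsWithin] with x hx
  exacts [(log_setIntegral_pow_mul_exp_neg_mem_Icc P hx).1,
    (log_setIntegral_pow_mul_exp_neg_mem_Icc P hx).2]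

end IncompleteGamma

lemma tendsto_div_log_of_tendsto_sub_mul_log {f : ℝ → ℝ} {a L : ℝ}
    (h : Tendsto (fun ρ => f ρ - a * log ρ) atTop (𝓝 L)) :
    Tendsto (fun ρ => f ρ / log ρ) atTop (𝓝 a) := by
  have h0 := (h.div_atTop tendsto_log_atTop).const_add a
  rw [add_zero] at h0
  refine h0.congr' ?_
  filter_upwards [eventually_gt_atTop 1] with ρ hρ
  field_simp [(log_pos hρ).ne']
  ring

theorem stmt_9_general (P : ℕ) (ε γ₀ γ₁ : ℝ) (hε : 0 < ε)
    (hpow : γ₁ ^ 2 * ε < γ₀ ^ 2) :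
    Tendsto (fun ρ : ℝ =>
        -Real.log ((∫ t in Set.Ioo (0 : ℝ)
            (ε * ((P : ℝ) + 1) / (ρ * (γ₀ ^ 2 - γ₁ ^ 2 * ε))),
          t ^ P * Real.exp (-t)) / (P.factorial : ℝ)) / Real.log ρ)
      atTop (nhds ((P : ℝ) + 1)) := by
  set c := ε * ((P : ℝ) + 1) / (γ₀ ^ 2 - γ₁ ^ 2 * ε)
  have hc : 0 < c := div_pos (by positivity) (by linarith)
  have hx : Tendsto (fun ρ => c / ρ) atTop (𝓝[>] 0) :=
    tendsto_nhdsWithin_iff.mpr ⟨tendsto_const_nhds.div_atTop tendsto_id,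
      (eventually_gt_atTop 0).mono fun ρ hρ => div_pos hc hρ⟩
  have hlim := ((tendsto_log_setIntegral_pow_mul_exp_neg_sub_mul_log P).comp hx).neg.sub_const
    ((P + 1) * log c - log P.factorial)
  refine tendsto_div_log_of_tendsto_sub_mul_log (hlim.congr' ?_)
  filter_upwards [eventually_gt_atTop 0] with ρ hρ
  have hI := setIntegral_pow_mul_exp_neg_pos P (div_pos hc hρ)
  have harg : ε * ((P : ℝ) + 1) / (ρ * (γ₀ ^ 2 - γ₁ ^ 2 * ε)) = c / ρ := by
    rw [mul_comm ρ, ← div_div]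
  simp only [Function.comp_apply]
  rw [harg, log_div hI.ne' (by positivity), log_div hc.ne' hρ.ne']
  ring

/-- The FD-DFE outage probability `P(ρ) = g(P+1, ε(P+1)/(ρ(γ_0²−γ_1²ε)))/P!` satisfies
`lim_{ρ→∞} −log P(ρ)/log ρ = P+1`: full multi-path diversity order `P+1`. -/
theorem stmt_9 (P : ℕ) (ε γ₀ γ₁ : ℝ) (hε : 0 < ε) (hγ₀ : 0 < γ₀) (hγ₁ : 0 < γ₁)
    (hpow : γ₁ ^ 2 * ε < γ₀ ^ 2) :
    Tendsto (fun ρ : ℝ =>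
        -Real.log ((∫ t in Set.Ioo (0 : ℝ)
            (ε * ((P : ℝ) + 1) / (ρ * (γ₀ ^ 2 - γ₁ ^ 2 * ε))),
          t ^ P * Real.exp (-t)) / (P.factorial : ℝ)) / Real.log ρ)
      atTop (nhds ((P : ℝ) + 1)) :=
  stmt_9_general P ε γ₀ γ₁ hε hpow
end

section
/- Fix ε_0, γ_0, γ_1 > 0 with γ_0^2 > γ_1^2 ε_0 and a positive integer n = NM. Suppose for each ρ > 0 the outage probability P(ρ) satisfies 1 − e^{−c(ρ)/n} ≤ P(ρ) ≤ n(1 − e^{−c(ρ)}) where c(ρ) = ε_0/(ρ(γ_0^2 − γ_1^2 ε_0)). Then lim_{ρ→∞} −log P(ρ)/log ρ = 1, i.e., the diversity order equals 1. -/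
/-!
Writing `c(ρ) = a / ρ` with `a = ε₀ / (γ₀² − γ₁² ε₀) > 0`, the elementary bounds
`x / 2 ≤ 1 − e^{−x} ≤ x` (the left one for `0 ≤ x ≤ 1`) sandwich the outage probability as
`a / (2n) · ρ⁻¹ ≤ P(ρ) ≤ n a · ρ⁻¹` for `ρ ≥ a`. Taking logarithms, `−log P(ρ) / log ρ` differs
from `1` by `O(1 / log ρ)`.
-/

open Filter Real Topology

theorem half_le_one_sub_exp_neg {x : ℝ} (hx₀ : 0 ≤ x) (hx₁ : x ≤ 1) : x / 2 ≤ 1 - exp (-x) := by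
  have h_inv : exp (-x) ≤ (1 + x)⁻¹ := by
    rw [exp_neg]
    exact inv_anti₀ (by positivity) (by linarith [add_one_le_exp x])
  have h_lin : (1 + x)⁻¹ ≤ 1 - x / 2 := by
    rw [inv_le_iff_one_le_mul₀ (by positivity)]
    nlinarith
  linarith

theorem one_sub_exp_neg_le (x : ℝ) : 1 - exp (-x) ≤ x := by
  linarith [add_one_le_exp (-x)]

theorem tendsto_const_sub_div_log_atTop (d C : ℝ) :
    Tendsto (fun ρ : ℝ => d - C / log ρ) atTop (𝓝 d) := by
  simpa using tendsto_const_nhds.sub (tendsto_const_nhds.div_atTop tendsto_log_atTop)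

theorem tendsto_neg_log_div_log_of_rpow_bounds {P : ℝ → ℝ} {C₁ C₂ d : ℝ} (hC₁ : 0 < C₁)
    (hC₂ : 0 < C₂) (hP : ∀ᶠ ρ in atTop, C₁ * ρ ^ (-d) ≤ P ρ ∧ P ρ ≤ C₂ * ρ ^ (-d)) :
    Tendsto (fun ρ => -log (P ρ) / log ρ) atTop (𝓝 d) := by
  have hlog_bounds : ∀ᶠ ρ in atTop,
      0 < log ρ ∧ log C₁ - d * log ρ ≤ log (P ρ) ∧ log (P ρ) ≤ log C₂ - d * log ρ := by
    filter_upwards [hP, eventually_gt_atTop 1] with ρ ⟨hlo, hhi⟩ hρ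
    have hρ_pos : 0 < ρ := by linarith
    have log_bound (C : ℝ) (hC : 0 < C) : log (C * ρ ^ (-d)) = log C - d * log ρ := by
      rw [log_mul hC.ne' (rpow_pos_of_pos hρ_pos _).ne', log_rpow hρ_pos]
      ring
    have hpos : 0 < P ρ := lt_of_lt_of_le (by positivity) hlo
    exact ⟨log_pos hρ, log_bound C₁ hC₁ ▸ log_le_log (by positivity) hlo,
      log_bound C₂ hC₂ ▸ log_le_log hpos hhi⟩
  refine tendsto_of_tendsto_of_tendsto_of_le_of_le' (tendsto_const_sub_div_log_atTop d (log C₂))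
    (tendsto_const_sub_div_log_atTop d (log C₁)) ?_ ?_
  · filter_upwards [hlog_bounds] with ρ ⟨hlog, _, hhi⟩
    rw [sub_le_iff_le_add, ← add_div, le_div_iff₀ hlog]
    linarith
  · filter_upwards [hlog_bounds] with ρ ⟨hlog, hlo, _⟩
    rw [le_sub_iff_add_le, ← add_div, div_le_iff₀ hlog]
    linarith

theorem stmt_11_general (ε₀ γ₀ γ₁ : ℝ) (hε : 0 < ε₀)
    (hpow : γ₁ ^ 2 * ε₀ < γ₀ ^ 2) (n : ℕ) (hn : 1 ≤ n) (Pout : ℝ → ℝ)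
    (hbound : ∀ ρ : ℝ, 0 < ρ →
      1 - Real.exp (-(ε₀ / (ρ * (γ₀ ^ 2 - γ₁ ^ 2 * ε₀))) / n) ≤ Pout ρ ∧
      Pout ρ ≤ n * (1 - Real.exp (-(ε₀ / (ρ * (γ₀ ^ 2 - γ₁ ^ 2 * ε₀)))))) :
    Tendsto (fun ρ : ℝ => -Real.log (Pout ρ) / Real.log ρ) atTop (nhds 1) := by
  set a := ε₀ / (γ₀ ^ 2 - γ₁ ^ 2 * ε₀) with ha_def
  have ha : 0 < a := div_pos hε (by linarith)
  have hn' : (1 : ℝ) ≤ n := by exact_mod_cast hn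
  refine tendsto_neg_log_div_log_of_rpow_bounds (C₁ := a / (2 * n)) (C₂ := n * a)
    (by positivity) (by positivity) ?_
  filter_upwards [eventually_ge_atTop a] with ρ hρa
  have hρ : 0 < ρ := ha.trans_le hρa
  have hc : ε₀ / (ρ * (γ₀ ^ 2 - γ₁ ^ 2 * ε₀)) = a / ρ := by rw [ha_def, div_div, mul_comm]
  have hc_le : a / ρ ≤ 1 := (div_le_one hρ).mpr hρa
  obtain ⟨hlo, hhi⟩ := hbound ρ hρ
  rw [hc, neg_div] at hlo
  rw [hc] at hhi
  rw [rpow_neg_one]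
  constructor
  · calc a / (2 * n) * ρ⁻¹ = a / ρ / n / 2 := by field_simp
      _ ≤ 1 - exp (-(a / ρ / n)) :=
        half_le_one_sub_exp_neg (by positivity) ((div_le_self (by positivity) hn').trans hc_le)
      _ ≤ Pout ρ := hlo
  · calc Pout ρ ≤ n * (1 - exp (-(a / ρ))) := hhi
      _ ≤ n * (a / ρ) := by gcongr; exact one_sub_exp_neg_le _
      _ = n * a * ρ⁻¹ := by ring

/-- If for every `ρ > 0` the outage probability `P(ρ)` satisfies
`1 − e^{−c(ρ)/n} ≤ P(ρ) ≤ n(1 − e^{−c(ρ)})` with `c(ρ) = ε_0/(ρ(γ_0² − γ_1² ε_0))`,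
then `lim_{ρ→∞} −log P(ρ)/log ρ = 1`: the diversity order is 1. -/
theorem stmt_11 (ε₀ γ₀ γ₁ : ℝ) (hε : 0 < ε₀) (hγ₀ : 0 < γ₀) (hγ₁ : 0 < γ₁)
    (hpow : γ₁ ^ 2 * ε₀ < γ₀ ^ 2) (n : ℕ) (hn : 1 ≤ n) (Pout : ℝ → ℝ)
    (hbound : ∀ ρ : ℝ, 0 < ρ →
      1 - Real.exp (-(ε₀ / (ρ * (γ₀ ^ 2 - γ₁ ^ 2 * ε₀))) / n) ≤ Pout ρ ∧
      Pout ρ ≤ n * (1 - Real.exp (-(ε₀ / (ρ * (γ₀ ^ 2 - γ₁ ^ 2 * ε₀)))))) :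
    Tendsto (fun ρ : ℝ => -Real.log (Pout ρ) / Real.log ρ) atTop (nhds 1) :=
  stmt_11_general ε₀ γ₀ γ₁ hε hpow n hn Pout hbound
end

section
/- Let G, H be independent unit-mean exponential random variables and ρ > 0, ε > 0. Then P( ρG/(ρH + 1) < ε ) = 1 − e^{−ε/ρ}/(1 + ε), and consequently lim_{ρ→∞} P(ρG/(ρH+1) < ε) = ε/(1+ε) > 0, i.e., the uplink fixed-rate outage probability exhibits an error floor. -/
/-!
On the almost sure event `H ≥ 0`, the complement `ρG/(ρH+1) ≥ ε` of the outage event is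
`G ≥ εH + ε/ρ`. Conditioning on `H` and using the exponential tail `P(G ≥ t) = e^{-t}`, its
probability is `e^{-ε/ρ} E[e^{-εH}] = e^{-ε/ρ}/(1+ε)`, the Laplace transform of `Exp(1)` at `ε`.
As `ρ → ∞` the factor `e^{-ε/ρ}` tends to `1`, while the interference term `εH` does not scale
away, leaving the floor `1 - 1/(1+ε)`.
-/

open MeasureTheory ProbabilityTheory Filter

open Set Real

namespace ProbabilityTheory

lemma ae_nonneg_expMeasure (r : ℝ) : ∀ᵐ x ∂expMeasure r, 0 ≤ x := by
  rw [ae_iff]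
  simp only [not_le]
  show (volume.withDensity (exponentialPDF r)) (Iio 0) = 0
  rw [withDensity_apply _ measurableSet_Iio]
  exact lintegral_exponentialPDF_of_nonpos le_rfl

lemma setLIntegral_expMeasure_Ici {r t : ℝ} (ht : 0 ≤ t) (f : ℝ → ENNReal) :
    ∫⁻ y in Ici t, f y ∂expMeasure r =
      ∫⁻ y in Ici t, ENNReal.ofReal (r * exp (-(r * y))) * f y := by
  show ∫⁻ y in Ici t, f y ∂(volume.withDensity (exponentialPDF r)) = _
  rw [setLIntegral_withDensity_eq_setLIntegral_mul_non_measurable (f := exponentialPDF r) _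
    (measurable_exponentialPDFReal r).ennreal_ofReal _ measurableSet_Ici
    (ae_of_all _ fun _ => ENNReal.ofReal_lt_top)]
  refine setLIntegral_congr_fun measurableSet_Ici fun y hy => ?_
  rw [Pi.mul_apply, exponentialPDF_of_nonneg (ht.trans hy)]

lemma lintegral_Ici_ofReal_exp_neg_mul {b : ℝ} (hb : 0 < b) (t : ℝ) :
    ∫⁻ y in Ici t, ENNReal.ofReal (exp (-(b * y))) = ENNReal.ofReal (exp (-(b * t)) / b) := by
  have hint : IntegrableOn (fun y => exp (-(b * y))) (Ioi t) := by
    simpa only [neg_mul] using exp_neg_integrableOn_Ioi t hb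
  rw [setLIntegral_congr Ioi_ae_eq_Ici.symm, ← ofReal_integral_eq_lintegral_ofReal hint
    (ae_of_all _ fun _ => (exp_pos _).le)]
  simp_rw [← neg_mul]
  rw [integral_exp_mul_Ioi (neg_lt_zero.mpr hb)]
  congr 1
  ring

lemma expMeasure_Ici {r t : ℝ} (hr : 0 < r) (ht : 0 ≤ t) :
    expMeasure r (Ici t) = ENNReal.ofReal (exp (-(r * t))) := by
  rw [← setLIntegral_one, setLIntegral_expMeasure_Ici ht]
  simp_rw [mul_one, ENNReal.ofReal_mul hr.le]
  rw [lintegral_const_mul _ (by fun_prop), lintegral_Ici_ofReal_exp_neg_mul hr,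
    ← ENNReal.ofReal_mul hr.le, mul_div_cancel₀ _ hr.ne']

lemma lintegral_exp_neg_mul_expMeasure {s a : ℝ} (hs : 0 < s) (ha : 0 < s + a) :
    ∫⁻ y, ENNReal.ofReal (exp (-(a * y))) ∂expMeasure s = ENNReal.ofReal (s / (s + a)) := by
  rw [← Measure.restrict_eq_self_of_ae_mem (s := Ici 0) (ae_nonneg_expMeasure s),
    setLIntegral_expMeasure_Ici le_rfl]
  have hexp (y : ℝ) : ENNReal.ofReal (s * exp (-(s * y))) * ENNReal.ofReal (exp (-(a * y))) =
      ENNReal.ofReal s * ENNReal.ofReal (exp (-((s + a) * y))) := by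
    rw [← ENNReal.ofReal_mul (by positivity), ← ENNReal.ofReal_mul hs.le, mul_assoc, ← exp_add]
    ring_nf
  simp_rw [hexp]
  rw [lintegral_const_mul _ (by fun_prop), lintegral_Ici_ofReal_exp_neg_mul ha,
    ← ENNReal.ofReal_mul hs.le, mul_zero, neg_zero, exp_zero, mul_one_div]

lemma measure_mul_add_le_of_indepFun_expMeasure {Ω : Type*} [MeasurableSpace Ω] {P : Measure Ω}
    {X Y : Ω → ℝ} {r s : ℝ} (hX : Measurable X) (hY : Measurable Y)
    (hXlaw : P.map X = expMeasure r) (hYlaw : P.map Y = expMeasure s) (hXY : IndepFun X Y P)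
    (hr : 0 < r) (hs : 0 < s) {a c : ℝ} (ha : 0 ≤ a) (hc : 0 ≤ c) :
    P {ω | a * Y ω + c ≤ X ω} = ENNReal.ofReal (exp (-(r * c)) * (s / (s + r * a))) := by
  have := isProbabilityMeasure_expMeasure hr
  have := isProbabilityMeasure_expMeasure hs
  have hS : MeasurableSet {p : ℝ × ℝ | a * p.2 + c ≤ p.1} :=
    measurableSet_le (by fun_prop) (by fun_prop)
  have hjoint : P.map (fun ω => (X ω, Y ω)) = (expMeasure r).prod (expMeasure s) := by
    rw [← hXlaw, ← hYlaw]
    exact (indepFun_iff_map_prod_eq_prod_map_map' hX.aemeasurable hY.aemeasurable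
      (hXlaw ▸ inferInstance) (hYlaw ▸ inferInstance)).mp hXY
  calc P {ω | a * Y ω + c ≤ X ω}
      = ∫⁻ y, expMeasure r (Ici (a * y + c)) ∂expMeasure s := by
        have h := Measure.map_apply (μ := P) (hX.prodMk hY) hS
        rw [hjoint, Measure.prod_apply_symm hS] at h
        exact h.symm
    _ = ∫⁻ y, ENNReal.ofReal (exp (-(r * c))) * ENNReal.ofReal (exp (-(r * a * y)))
          ∂expMeasure s := by
        refine lintegral_congr_ae ?_
        filter_upwards [ae_nonneg_expMeasure s] with y hy
        rw [expMeasure_Ici hr (by positivity), ← ENNReal.ofReal_mul (exp_pos _).le, ← exp_add]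
        ring_nf
    _ = ENNReal.ofReal (exp (-(r * c)) * (s / (s + r * a))) := by
        rw [lintegral_const_mul _ (by fun_prop),
          lintegral_exp_neg_mul_expMeasure hs (by positivity), ← ENNReal.ofReal_mul (exp_pos _).le]

lemma measure_le_mul_div_mul_add_one_of_indepFun_expMeasure {Ω : Type*} [MeasurableSpace Ω]
    {P : Measure Ω} {X Y : Ω → ℝ} {r s : ℝ} (hX : Measurable X) (hY : Measurable Y)
    (hXlaw : P.map X = expMeasure r) (hYlaw : P.map Y = expMeasure s) (hXY : IndepFun X Y P)
    (hr : 0 < r) (hs : 0 < s) {ρ ε : ℝ} (hρ : 0 < ρ) (hε : 0 ≤ ε) :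
    P {ω | ε ≤ ρ * X ω / (ρ * Y ω + 1)} =
      ENNReal.ofReal (exp (-(r * (ε / ρ))) * (s / (s + r * ε))) := by
  have hYnonneg : ∀ᵐ ω ∂P, 0 ≤ Y ω :=
    ae_of_ae_map hY.aemeasurable (hYlaw ▸ ae_nonneg_expMeasure s)
  have hrescale : {ω | ε ≤ ρ * X ω / (ρ * Y ω + 1)} =ᵐ[P] {ω | ε * Y ω + ε / ρ ≤ X ω} := by
    rw [eventuallyEq_set]
    filter_upwards [hYnonneg] with ω hω
    rw [le_div_iff₀ (by positivity), ← div_le_iff₀' hρ]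
    congr! 1
    field_simp
  rw [measure_congr hrescale, measure_mul_add_le_of_indepFun_expMeasure hX hY hXlaw hYlaw hXY
    hr hs hε (by positivity)]

end ProbabilityTheory

/-- If `G, H` are independent unit-mean exponential random variables, then
`P(ρG/(ρH+1) < ε) = 1 − e^{−ε/ρ}/(1+ε)`; consequently the outage probability tends to
the error floor `ε/(1+ε) > 0` as `ρ → ∞`. -/
theorem stmt_18 {Ω : Type*} [MeasureSpace Ω] [IsProbabilityMeasure (volume : Measure Ω)]
    (G H : Ω → ℝ) (hGmeas : Measurable G) (hHmeas : Measurable H)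
    (hGlaw : Measure.map G volume = expMeasure 1)
    (hHlaw : Measure.map H volume = expMeasure 1)
    (hindep : IndepFun G H) (ε : ℝ) (hε : 0 < ε) :
    (∀ ρ : ℝ, 0 < ρ →
      (volume {ω : Ω | ρ * G ω / (ρ * H ω + 1) < ε}).toReal =
        1 - Real.exp (-ε / ρ) / (1 + ε)) ∧
    Tendsto (fun ρ : ℝ =>
        (volume {ω : Ω | ρ * G ω / (ρ * H ω + 1) < ε}).toReal)
      atTop (nhds (ε / (1 + ε))) ∧
    0 < ε / (1 + ε) := by
  have houtage (ρ : ℝ) (hρ : 0 < ρ) : (volume {ω : Ω | ρ * G ω / (ρ * H ω + 1) < ε}).toReal =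
      1 - exp (-ε / ρ) / (1 + ε) := by
    have hcompl : {ω : Ω | ρ * G ω / (ρ * H ω + 1) < ε} =
        {ω | ε ≤ ρ * G ω / (ρ * H ω + 1)}ᶜ := by
      simp only [compl_ofPred, not_le]
    rw [← measureReal_def, hcompl, probReal_compl_eq_one_sub (measurableSet_le (by fun_prop)
      (by fun_prop)), measureReal_def, measure_le_mul_div_mul_add_one_of_indepFun_expMeasure
      hGmeas hHmeas hGlaw hHlaw hindep one_pos one_pos hρ hε.le, ENNReal.toReal_ofReal
      (by positivity)]
    ring_nf
  have hlim : Tendsto (fun ρ : ℝ => 1 - exp (-ε / ρ) / (1 + ε)) atTop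
      (nhds (1 - exp 0 / (1 + ε))) :=
    (((tendsto_const_nhds.div_atTop tendsto_id).rexp).div_const _).const_sub _
  refine ⟨houtage, ?_, by positivity⟩
  rw [show ε / (1 + ε) = 1 - exp 0 / (1 + ε) by rw [exp_zero]; field_simp; ring]
  exact hlim.congr' ((eventually_gt_atTop 0).mono fun ρ hρ => (houtage ρ hρ).symm)
end
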